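/- Let h_CD, h_CB, h_SC, h_SB, p_S, σ_B², σ_C², σ_D², P_C > 0, β ≥ 0, λ ∈ [0,1], and let R̃_B ∈ [0, log₂(1 + P_C·h_CB/(p_S·h_SB + σ_B²))]. Set L = (p_S·h_SB + σ_B²)(2^{R̃_B} − 1)/h_CB, R_{CD,S}(x) = log₂(1 − (1 − 2^{−R̃_B})·h_CD·(p_S·h_SB + σ_B²)/(h_CB·σ_D²) + (2^{−R̃_B}·h_CD/σ_D²)·x), R_{SC}(x) = log₂(1 + p_S·h_SC/(β·x^λ + σ_C²)), and D(x) = min(R_{SC}(x), R_{CD,S}(x)). Then L ≤ P_C, and the maximum of D over [L, P_C] is attained at: x = L if R_{CD,S}(L) ≥ R_{SC}(L); x = P_C if R_{CD,S}(P_C) ≤ R_{SC}(P_C); and otherwise at the unique p̂ ∈ (L, P_C) satisfying R_{CD,S}(p̂) = R_{SC}(p̂), in which case max D = R_{CD,S}(p̂) = R_{SC}(p̂). -/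

import Mathlib

/-!
The second-hop rate `R_{CD,S}` is the logarithm of an affine function of the relay power `x` with
positive slope, so it is strictly increasing, while the first-hop rate `R_{SC}` is nonincreasing
because the residual self-interference `β x^λ` grows with `x`. The minimum of an increasing and a
decreasing function is maximised at an endpoint when the two graphs do not cross on the interval,
and otherwise at the crossing point, which exists by the intermediate value theorem and is unique
because `R_{CD,S} - R_{SC}` is strictly increasing. The bound `L ≤ P_C` is the rearranged
constraint `R̃_B ≤ log₂(1 + P_C h_CB / (p_S h_SB + σ_B²))`.
-/

open Set Real

section MaxOfMin

variable {α β : Type*} [LinearOrder β] {f g : α → β} {s : Set α}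

theorem isMaxOn_min_of_isGreatest [Preorder α] (hf : MonotoneOn f s) {b : α}
    (hb : IsGreatest s b) (hfg : f b ≤ g b) :
    IsMaxOn (fun x => min (g x) (f x)) s b :=
  isMaxOn_iff.2 fun x hx => by
    rw [min_eq_right hfg]
    exact (min_le_right _ _).trans (hf hx hb.1 (hb.2 hx))

theorem isMaxOn_min_of_isLeast [Preorder α] (hg : AntitoneOn g s) {a : α}
    (ha : IsLeast s a) (hgf : g a ≤ f a) :
    IsMaxOn (fun x => min (g x) (f x)) s a :=
  isMaxOn_iff.2 fun x hx => by
    rw [min_eq_left hgf]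
    exact (min_le_left _ _).trans (hg ha.1 hx (ha.2 hx))

theorem isMaxOn_min_of_eq [LinearOrder α] (hf : MonotoneOn f s) (hg : AntitoneOn g s) {p : α}
    (hp : p ∈ s) (hfg : f p = g p) :
    IsMaxOn (fun x => min (g x) (f x)) s p :=
  isMaxOn_iff.2 fun x hx => by
    rcases le_total x p with hxp | hpx
    · calc min (g x) (f x) ≤ f x := min_le_right _ _
        _ ≤ f p := hf hx hp hxp
        _ = min (g p) (f p) := by rw [hfg, min_self]
    · calc min (g x) (f x) ≤ g x := min_le_left _ _
        _ ≤ g p := hg hp hx hpx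
        _ = min (g p) (f p) := by rw [hfg, min_self]

end MaxOfMin

theorem StrictMonoOn.sub_antitoneOn {α β : Type*} [Preorder α] [AddCommGroup β] [PartialOrder β]
    [IsOrderedAddMonoid β] {f g : α → β} {s : Set α} (hf : StrictMonoOn f s)
    (hg : AntitoneOn g s) : StrictMonoOn (f - g) s :=
  fun _ hx _ hy hxy =>
    (sub_lt_sub_right (hf hx hy hxy) _).trans_le (sub_le_sub_left (hg hx hy hxy.le) _)

theorem exists_unique_eq_isMaxOn_min {f g : ℝ → ℝ} {a b : ℝ} (hab : a ≤ b)
    (hfc : ContinuousOn f (Icc a b)) (hgc : ContinuousOn g (Icc a b))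
    (hf : StrictMonoOn f (Icc a b)) (hg : AntitoneOn g (Icc a b))
    (ha : f a < g a) (hb : g b < f b) :
    ∃ p ∈ Ioo a b, f p = g p ∧ (∀ q ∈ Ioo a b, f q = g q → q = p) ∧
      IsMaxOn (fun x => min (g x) (f x)) (Icc a b) p := by
  obtain ⟨p, hp, hfgp⟩ : ∃ p ∈ Ioo a b, f p - g p = 0 :=
    intermediate_value_Ioo hab (hfc.sub hgc) ⟨sub_neg.2 ha, sub_pos.2 hb⟩
  rw [sub_eq_zero] at hfgp
  refine ⟨p, hp, hfgp, fun q hq hfgq => ?_,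
    isMaxOn_min_of_eq hf.monotoneOn hg (Ioo_subset_Icc_self hp) hfgp⟩
  exact (hf.sub_antitoneOn hg).injOn (Ioo_subset_Icc_self hq) (Ioo_subset_Icc_self hp)
    (by simp only [Pi.sub_apply, hfgp, hfgq, sub_self])

section AffineRate

variable {a b c L : ℝ}

theorem strictMonoOn_logb_add_mul (hb : 1 < b) (hc : 0 < c) (hL : 0 < a + c * L) :
    StrictMonoOn (fun x => logb b (a + c * x)) (Ici L) :=
  fun x hx y _ hxy => logb_lt_logb hb (by nlinarith [mem_Ici.1 hx]) (by nlinarith)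

theorem continuousOn_logb_add_mul (hc : 0 < c) (hL : 0 < a + c * L) :
    ContinuousOn (fun x => logb b (a + c * x)) (Ici L) :=
  (continuous_const_add a |>.comp (continuous_const_mul c)).continuousOn.logb
    fun x hx => by dsimp only [Function.comp_apply]; nlinarith [mem_Ici.1 hx]

end AffineRate

section InterferenceRate

variable {a β σ lam : ℝ}

theorem antitoneOn_logb_one_add_div_rpow (ha : 0 ≤ a) (hβ : 0 ≤ β) (hσ : 0 < σ)
    (hlam : 0 ≤ lam) :
    AntitoneOn (fun x => logb 2 (1 + a / (β * x ^ lam + σ))) (Ici 0) := by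
  intro x (hx : 0 ≤ x) y (hy : 0 ≤ y) hxy
  have hpow : x ^ lam ≤ y ^ lam := rpow_le_rpow hx hxy hlam
  refine logb_le_logb_of_le one_lt_two (by positivity) ?_
  gcongr

theorem continuousOn_logb_one_add_div_rpow (ha : 0 ≤ a) (hβ : 0 ≤ β) (hσ : 0 < σ)
    (hlam : 0 ≤ lam) :
    ContinuousOn (fun x => logb 2 (1 + a / (β * x ^ lam + σ))) (Ici 0) := by
  have hden : ∀ x ∈ Ici (0 : ℝ), 0 < β * x ^ lam + σ := fun x (_ : 0 ≤ x) => by positivity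
  refine ContinuousOn.logb ?_ fun x hx => by have := hden x hx; positivity
  exact continuousOn_const.add <| continuousOn_const.div
    ((continuous_const.mul (continuous_rpow_const hlam)).add continuous_const).continuousOn
    fun x hx => (hden x hx).ne'

end InterferenceRate

theorem div_le_of_le_logb_one_add {S h P R : ℝ} (hS : 0 < S) (hh : 0 < h) (hP : 0 ≤ P)
    (hR : R ≤ logb 2 (1 + P * h / S)) : S * (2 ^ R - 1) / h ≤ P := by
  rw [le_logb_iff_rpow_le one_lt_two (by positivity)] at hR
  rw [div_le_iff₀ hh, ← le_div_iff₀' hS]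
  linarith

/-- At relay power `L` the second hop has signal-to-noise ratio `1`, i.e. rate `0`. -/
theorem one_sub_mul_add_mul_div_eq_one (R k S h σ : ℝ) (hh : h ≠ 0) (hσ : σ ≠ 0) :
    1 - (1 - (2 : ℝ) ^ (-R)) * k * S / (h * σ)
      + ((2 : ℝ) ^ (-R) * k / σ) * (S * (2 ^ R - 1) / h) = 1 := by
  have h2 : (2 : ℝ) ^ (-R) * 2 ^ R = 1 := by rw [← rpow_add two_pos, neg_add_cancel, rpow_zero]
  field_simp
  linear_combination k * S * h2

/-- Theorem 1: characterization of the power achieving the Pareto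
boundary of the achievable rate region. -/
theorem pareto_boundary_power_allocation
    (hCD hCB hSC hSB pS σB2 σC2 σD2 PC β lam RB : ℝ)
    (hhCD : 0 < hCD) (hhCB : 0 < hCB) (hhSC : 0 < hSC) (hhSB : 0 < hSB)
    (hpS : 0 < pS) (hσB : 0 < σB2) (hσC : 0 < σC2) (hσD : 0 < σD2) (hPC : 0 < PC)
    (hβ : 0 ≤ β) (hlam : lam ∈ Icc (0 : ℝ) 1)
    (hRB : RB ∈ Icc 0 (logb 2 (1 + PC * hCB / (pS * hSB + σB2)))) :
    let L : ℝ := (pS * hSB + σB2) * ((2 : ℝ) ^ RB - 1) / hCB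
    let RCDS : ℝ → ℝ := fun x =>
      logb 2 (1 - (1 - (2 : ℝ) ^ (-RB)) * hCD * (pS * hSB + σB2) / (hCB * σD2)
        + ((2 : ℝ) ^ (-RB) * hCD / σD2) * x)
    let RSC : ℝ → ℝ := fun x => logb 2 (1 + pS * hSC / (β * x ^ lam + σC2))
    let D : ℝ → ℝ := fun x => min (RSC x) (RCDS x)
    L ≤ PC ∧
    ((RSC L ≤ RCDS L) → ∀ x ∈ Icc L PC, D x ≤ D L) ∧
    ((RCDS PC ≤ RSC PC) → ∀ x ∈ Icc L PC, D x ≤ D PC) ∧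
    ((RCDS L < RSC L ∧ RSC PC < RCDS PC) →
      ∃ p ∈ Ioo L PC, RCDS p = RSC p ∧
        (∀ p' ∈ Ioo L PC, RCDS p' = RSC p' → p' = p) ∧
        (∀ x ∈ Icc L PC, D x ≤ D p) ∧ D p = RCDS p ∧ D p = RSC p) := by
  intro L RCDS RSC D
  have hS : 0 < pS * hSB + σB2 := by positivity
  have hL : 0 ≤ L := by
    have := one_le_rpow one_le_two hRB.1
    exact div_nonneg (mul_nonneg hS.le (by linarith)) hhCB.le
  have hLPC : L ≤ PC := div_le_of_le_logb_one_add hS hhCB hPC.le hRB.2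
  have hsnrL_pos := zero_lt_one.trans_eq
    (one_sub_mul_add_mul_div_eq_one RB hCD (pS * hSB + σB2) hCB σD2 hhCB.ne' hσD.ne').symm
  have hc : 0 < (2 : ℝ) ^ (-RB) * hCD / σD2 := by positivity
  have hIcc : Icc L PC ⊆ Ici 0 := fun x hx => hL.trans hx.1
  have hf : StrictMonoOn RCDS (Icc L PC) :=
    (strictMonoOn_logb_add_mul one_lt_two hc hsnrL_pos).mono Icc_subset_Ici_self
  have hfc : ContinuousOn RCDS (Icc L PC) :=
    (continuousOn_logb_add_mul hc hsnrL_pos).mono Icc_subset_Ici_self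
  have hg : AntitoneOn RSC (Icc L PC) :=
    (antitoneOn_logb_one_add_div_rpow (by positivity) hβ hσC hlam.1).mono hIcc
  have hgc : ContinuousOn RSC (Icc L PC) :=
    (continuousOn_logb_one_add_div_rpow (by positivity) hβ hσC hlam.1).mono hIcc
  refine ⟨hLPC, fun h => isMaxOn_iff.1 (isMaxOn_min_of_isLeast hg (isLeast_Icc hLPC) h),
    fun h => isMaxOn_iff.1 (isMaxOn_min_of_isGreatest hf.monotoneOn (isGreatest_Icc hLPC) h), ?_⟩
  rintro ⟨ha, hb⟩
  obtain ⟨p, hp, hfg, huniq, hmax⟩ := exists_unique_eq_isMaxOn_min hLPC hfc hgc hf hg ha hb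
  exact ⟨p, hp, hfg, huniq, isMaxOn_iff.1 hmax, min_eq_right hfg.le, min_eq_left hfg.ge⟩
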